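/- Define s : ℕ → List ℕ by s(0) = [0] and s(k+1) = (s(k) ++ ⋯ ++ s(k), p copies concatenated) with the last entry incremented by 1, for a fixed prime p. Then s(k) has length p^k and for every i with 1 ≤ i ≤ p^k, the i-th entry of s(k) equals v_p(i). -/

import Mathlib

/-! By induction, `sieveSeq p k` lists `v_p(n)` for `n = 1, …, p ^ k`. The `p` copies of the
previous list give `v_p(n mod p ^ k)` at position `n` (with residues taken in `1, …, p ^ k`), and
this is `v_p(n)` because `n ≡ n mod p ^ k` pins down valuations up to `k`; the only position where
`v_p(n)` exceeds `k` is the last one, `n = p ^ (k + 1)`, which is the entry the increment fixes. -/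

/-- Increment the last entry of a list by 1 (identity on the empty list). -/
def incLast (l : List ℕ) : List ℕ := l.dropLast ++ (l.getLast?.map (· + 1)).toList

/-- The sieve sequence for `p`: start with `[0]`; at each step concatenate `p` copies
and increment the final entry. -/
def sieveSeq (p : ℕ) : ℕ → List ℕ
  | 0 => [0]
  | k + 1 => incLast (List.flatten (List.replicate p (sieveSeq p k)))

lemma incLast_append_singleton (l : List ℕ) (a : ℕ) : incLast (l ++ [a]) = l ++ [a + 1] := by
  simp [incLast]

lemma List.flatten_replicate_map_range {α : Type*} (f : ℕ → α) (q n : ℕ) :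
    (List.replicate q ((List.range n).map f)).flatten =
      (List.range (q * n)).map fun i => f (i % n) := by
  induction q with
  | zero => simp
  | succ q ih =>
    rw [List.replicate_succ', List.flatten_append, ih, Nat.succ_mul, List.range_add,
      List.map_append, List.map_map, List.flatten_singleton]
    congr 1
    refine List.map_congr_left fun i hi => ?_
    simp [Nat.mod_eq_of_lt (List.mem_range.1 hi)]

lemma Nat.mod_add_one_eq_of_add_one_eq_mul {N a b : ℕ} (h : N + 1 = a * b) :
    N % a + 1 = a := by
  have ha : 0 < a := Nat.pos_of_mul_pos_right (h ▸ N.add_one_pos)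
  have hb : 0 < b := Nat.pos_of_mul_pos_left (h ▸ N.add_one_pos)
  have hN : N = a * (b - 1) + (a - 1) := by
    rw [Nat.mul_sub_one]
    have := Nat.le_mul_of_pos_right a hb
    omega
  rw [hN, Nat.mul_add_mod, Nat.mod_eq_of_lt (by omega)]
  omega

section padicValNat

variable {p : ℕ} [Fact p.Prime]

theorem min_padicValNat_eq_of_modEq {k a b : ℕ} (ha : a ≠ 0) (hb : b ≠ 0)
    (h : a ≡ b [MOD p ^ k]) : min (padicValNat p a) k = min (padicValNat p b) k := by
  have le_iff : ∀ t ≤ k, t ≤ padicValNat p a ↔ t ≤ padicValNat p b := fun t ht => by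
    rw [← padicValNat_dvd_iff_le ha, ← padicValNat_dvd_iff_le hb]
    exact h.dvd_iff (pow_dvd_pow p ht)
  apply le_antisymm <;> refine le_min ?_ (min_le_right _ _)
  · exact (le_iff _ (min_le_right _ _)).1 (min_le_left _ _)
  · exact (le_iff _ (min_le_right _ _)).2 (min_le_left _ _)

theorem padicValNat_mod_pow_add_one {n k : ℕ} (h : n + 1 < p ^ (k + 1)) :
    padicValNat p (n % p ^ k + 1) = padicValNat p (n + 1) := by
  have hp := (Fact.out : p.Prime)
  have hmod : n % p ^ k + 1 < p ^ (k + 1) :=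
    Nat.lt_of_le_of_lt (Nat.mod_lt n (pow_pos hp.pos k))
      (Nat.pow_lt_pow_right hp.one_lt k.lt_succ_self)
  have hmin := min_padicValNat_eq_of_modEq (n % p ^ k).succ_ne_zero n.succ_ne_zero
    ((Nat.mod_modEq n (p ^ k)).add_right 1)
  have le_of_lt_pow {m : ℕ} (hm : m ≠ 0) (hmk : m < p ^ (k + 1)) : padicValNat p m ≤ k :=
    Nat.lt_succ_iff.1 ((padicValNat_le_nat_log m).trans_lt (Nat.log_lt_of_lt_pow hm hmk))
  rwa [min_eq_left (le_of_lt_pow (n % p ^ k).succ_ne_zero hmod),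
    min_eq_left (le_of_lt_pow n.succ_ne_zero h)] at hmin

end padicValNat

theorem sieveSeq_eq_map_range {p : ℕ} (hp : p.Prime) (k : ℕ) :
    sieveSeq p k = (List.range (p ^ k)).map fun n => padicValNat p (n + 1) := by
  have := Fact.mk hp
  induction k with
  | zero => simp [sieveSeq]
  | succ k ih =>
    obtain ⟨N, hN⟩ : ∃ N, p ^ (k + 1) = N + 1 :=
      Nat.exists_eq_succ_of_ne_zero (pow_pos hp.pos _).ne'
    rw [sieveSeq, ih, List.flatten_replicate_map_range, ← pow_succ', hN, List.range_succ,
      List.map_append, List.map_singleton, incLast_append_singleton, List.map_append,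
      List.map_singleton]
    congr 1
    · refine List.map_congr_left fun n hn => padicValNat_mod_pow_add_one (p := p) ?_
      rw [hN]
      exact Nat.succ_lt_succ (List.mem_range.1 hn)
    · rw [Nat.mod_add_one_eq_of_add_one_eq_mul (hN.symm.trans (pow_succ p k)), ← hN,
        padicValNat.prime_pow, padicValNat.prime_pow]

theorem sieveSeq_eq_padicValNat (p : ℕ) (hp : p.Prime) (k : ℕ) :
    (sieveSeq p k).length = p ^ k ∧
      ∀ i : ℕ, 1 ≤ i → i ≤ p ^ k → (sieveSeq p k).getD (i - 1) 0 = padicValNat p i := by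
  rw [sieveSeq_eq_map_range hp]
  refine ⟨by simp, fun i hi hik => ?_⟩
  rw [List.getD_eq_getElem?_getD, List.getElem?_map, List.getElem?_range (by omega)]
  simp [Nat.sub_add_cancel hi]
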